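/- Let n ≥ 3 and k ≥ 3 be integers and let t₀ be the largest real root of f_{n,k} (i.e., f_{n,k}(t₀) = 0 and f_{n,k}(t) > 0 for all t > t₀). Then for every real number t > 0, setting S(t) = (n/2)·(1 + √(1 + 4(k−2)t)), the inequality S(t) ≥ n + n³t/(2(n−1)) − (n(n−2)/(2(n−1)))·√(n²t² + 4(n−1)t) holds if and only if t ≤ t₀; moreover equality holds if and only if t = t₀. -/

import Mathlib

/-!
Write `A = √(1 + 4(k-2)t)`, `B = √(n²t² + 4(n-1)t)`, `L = (n-1)A + (n-2)B` and `R = (n-1) + n²t`.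
Then `S(t)` minus the threshold is a positive multiple of `L - R`, and
`L² - R² = X + Y` with `X = 4n²(n-1)t(t₁ - t)` and `Y = 2(n-1)(n-2)AB > 0`.
For `t ≤ t₁` this is positive. For `t > t₁` the conjugate `X - Y` is negative and
`X² - Y² = 16(n-1)²t f_{n,k}(t)`, so the sign of `S(t)` minus the threshold is minus the sign
of `f_{n,k}(t)`. It remains to see that `f_{n,k} < 0` on `(max(t₁, 0), t₀)`. Since `f_{n,k}(0) < 0`
and `f_{n,k}(t₁) < 0` if `t₁ > 0`, the root `t₀` lies beyond `max(t₁, 0)`, and there `f_{n,k}(t)/t²`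
is strictly increasing: its derivative has the sign of `t f' - 2f`, a depressed cubic in `2n²t` that stays
positive for `2n²t > max(2n²t₁, 0)`.
-/

/-- The cubic polynomial `f_{n,k}` from Theorem 1.4 of the paper. -/
noncomputable def fnk (n k : ℤ) (t : ℝ) : ℝ :=
  (n : ℝ) ^ 4 * t ^ 3
    - (n : ℝ) ^ 2 * (((k : ℝ) - 1) * (n : ℝ) ^ 2 - 2 * ((k : ℝ) + 2) * (n : ℝ)
        + 2 * ((k : ℝ) + 2)) * t ^ 2
    - ((n : ℝ) - 1) * (3 * (n : ℝ) - ((k : ℝ) + 2)) * (((k : ℝ) - 1) * (n : ℝ)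
        - ((k : ℝ) + 2)) * t
    - ((n : ℝ) - 1) * ((n : ℝ) - 2) ^ 2

/-- The derivative `f'_{n,k}` of the cubic `f_{n,k}`. -/
noncomputable def fnk' (n k : ℤ) (t : ℝ) : ℝ :=
  3 * (n : ℝ) ^ 4 * t ^ 2
    - 2 * (n : ℝ) ^ 2 * (((k : ℝ) - 1) * (n : ℝ) ^ 2 - 2 * ((k : ℝ) + 2) * (n : ℝ)
        + 2 * ((k : ℝ) + 2)) * t
    - ((n : ℝ) - 1) * (3 * (n : ℝ) - ((k : ℝ) + 2)) * (((k : ℝ) - 1) * (n : ℝ)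
        - ((k : ℝ) + 2))

/-- The quantity `t₁ = (n² + 2(n−1)(k−6))/(2n²)`. -/
noncomputable def tOne (n k : ℤ) : ℝ :=
  ((n : ℝ) ^ 2 + 2 * ((n : ℝ) - 1) * ((k : ℝ) - 6)) / (2 * (n : ℝ) ^ 2)

open SignType

noncomputable def secondFormNormSq (n k : ℤ) (t : ℝ) : ℝ :=
  (n : ℝ) / 2 * (1 + √(1 + 4 * ((k : ℝ) - 2) * t))

noncomputable def liThreshold (n : ℤ) (t : ℝ) : ℝ :=
  (n : ℝ) + (n : ℝ) ^ 3 * t / (2 * ((n : ℝ) - 1))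
    - ((n : ℝ) * ((n : ℝ) - 2) / (2 * ((n : ℝ) - 1)))
      * √((n : ℝ) ^ 2 * t ^ 2 + 4 * ((n : ℝ) - 1) * t)

lemma depressed_cubic_pos {p q u v : ℝ} (hu : 0 ≤ u) (huv : u < v)
    (hp : 0 ≤ 3 * u ^ 2 + p) (hq : 0 ≤ u ^ 3 + p * u + q) : 0 < v ^ 3 + p * v + q := by
  have hvu : 0 < v - u := sub_pos.2 huv
  -- Taylor expansion at `u`
  nlinarith [mul_nonneg hvu.le hp, mul_pos (pow_pos hvu 2) (by linarith : 0 < v + 2 * u)]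

lemma sign_sub_eq_sign_sq_sub_sq {L R : ℝ} (hL : 0 ≤ L) (hR : 0 < R) :
    sign (L - R) = sign (L ^ 2 - R ^ 2) := by
  rw [sq_sub_sq, sign_mul, sign_pos (by positivity : 0 < L + R), one_mul]

lemma sign_eq_neg_sign_of_mul_eq {P Q c F : ℝ} (h : P * Q = c * F) (hc : 0 < c) (hQ : Q < 0) :
    sign P = -sign F := by
  rw [← one_mul (sign F), ← sign_pos hc, ← sign_mul, ← h, sign_mul, sign_neg hQ]
  simp

lemma ge_iff_and_eq_iff_of_sign_sub_eq {x y a b : ℝ} (h : sign (x - y) = sign (b - a)) :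
    (x ≥ y ↔ a ≤ b) ∧ (x = y ↔ a = b) := by
  constructor
  · rw [ge_iff_le, ← sub_nonneg, ← sign_nonneg_iff, h, sign_nonneg_iff, sub_nonneg]
  · rw [← sub_eq_zero, ← sign_eq_zero_iff, h, sign_eq_zero_iff, sub_eq_zero, eq_comm]

lemma lt_of_neg_of_forall_gt_pos {f : ℝ → ℝ} {s t₀ : ℝ} (h₀ : f t₀ = 0)
    (hpos : ∀ t, t₀ < t → 0 < f t) (hs : f s < 0) : s < t₀ := by
  rcases lt_trichotomy s t₀ with h | rfl | h
  · exact h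
  · linarith
  · linarith [hpos s h]

section

variable {n k : ℤ} {t : ℝ}

lemma one_add_four_mul_pos (hk : 2 ≤ k) (ht : 0 < t) : 0 < 1 + 4 * ((k : ℝ) - 2) * t := by
  have : (0 : ℝ) ≤ k - 2 := sub_nonneg.2 (mod_cast hk)
  positivity

lemma two_mul_sq_mul_tOne (hn : (n : ℝ) ≠ 0) :
    2 * (n : ℝ) ^ 2 * tOne n k = (n : ℝ) ^ 2 + 2 * ((n : ℝ) - 1) * ((k : ℝ) - 6) := by
  unfold tOne
  field_simp

lemma secondFormNormSq_sub_liThreshold (hn : (n : ℝ) ≠ 1) :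
    secondFormNormSq n k t - liThreshold n t
      = (n : ℝ) / (2 * ((n : ℝ) - 1)) *
        ((((n : ℝ) - 1) * √(1 + 4 * ((k : ℝ) - 2) * t)
            + ((n : ℝ) - 2) * √((n : ℝ) ^ 2 * t ^ 2 + 4 * ((n : ℝ) - 1) * t))
          - (((n : ℝ) - 1) + (n : ℝ) ^ 2 * t)) := by
  have : (n : ℝ) - 1 ≠ 0 := sub_ne_zero.2 hn
  unfold secondFormNormSq liThreshold
  field_simp
  ring

lemma sq_sub_sq_eq {A B : ℝ} (hA : A ^ 2 = 1 + 4 * ((k : ℝ) - 2) * t)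
    (hB : B ^ 2 = (n : ℝ) ^ 2 * t ^ 2 + 4 * ((n : ℝ) - 1) * t) (hn : (n : ℝ) ≠ 0) :
    (((n : ℝ) - 1) * A + ((n : ℝ) - 2) * B) ^ 2 - (((n : ℝ) - 1) + (n : ℝ) ^ 2 * t) ^ 2
      = 4 * (n : ℝ) ^ 2 * ((n : ℝ) - 1) * t * (tOne n k - t)
        + 2 * ((n : ℝ) - 1) * ((n : ℝ) - 2) * (A * B) := by
  linear_combination ((n : ℝ) - 1) ^ 2 * hA + ((n : ℝ) - 2) ^ 2 * hB
    - 2 * ((n : ℝ) - 1) * t * two_mul_sq_mul_tOne (k := k) hn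

/-- `f_{n,k}` is what remains of the equation `L = R` after squaring it twice. -/
lemma sq_sub_sq_eq_fnk (hn : (n : ℝ) ≠ 0) :
    (4 * (n : ℝ) ^ 2 * ((n : ℝ) - 1) * t * (tOne n k - t)) ^ 2
      - (2 * ((n : ℝ) - 1) * ((n : ℝ) - 2)) ^ 2
        * ((1 + 4 * ((k : ℝ) - 2) * t) * ((n : ℝ) ^ 2 * t ^ 2 + 4 * ((n : ℝ) - 1) * t))
      = 16 * ((n : ℝ) - 1) ^ 2 * t * fnk n k t := by
  unfold tOne fnk
  field_simp
  ring

lemma sign_secondFormNormSq_sub_liThreshold (hn : 3 ≤ n) (hk : 2 ≤ k) (ht : 0 < t) :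
    sign (secondFormNormSq n k t - liThreshold n t)
      = sign (4 * (n : ℝ) ^ 2 * ((n : ℝ) - 1) * t * (tOne n k - t)
          + 2 * ((n : ℝ) - 1) * ((n : ℝ) - 2) * (√(1 + 4 * ((k : ℝ) - 2) * t)
            * √((n : ℝ) ^ 2 * t ^ 2 + 4 * ((n : ℝ) - 1) * t))) := by
  have hn3 : (3 : ℝ) ≤ n := mod_cast hn
  have hn1 : (0 : ℝ) < n - 1 := by linarith
  have hn2 : (0 : ℝ) < n - 2 := by linarith
  have hA : 0 ≤ 1 + 4 * ((k : ℝ) - 2) * t := (one_add_four_mul_pos hk ht).le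
  have hB : 0 ≤ (n : ℝ) ^ 2 * t ^ 2 + 4 * ((n : ℝ) - 1) * t := by positivity
  rw [secondFormNormSq_sub_liThreshold (by linarith), sign_mul,
    sign_pos (by apply div_pos <;> linarith), one_mul,
    sign_sub_eq_sign_sq_sub_sq (by positivity) (by positivity),
    sq_sub_sq_eq (Real.sq_sqrt hA) (Real.sq_sqrt hB) (by positivity)]

lemma liThreshold_lt_secondFormNormSq (hn : 3 ≤ n) (hk : 2 ≤ k) (ht : 0 < t)
    (htOne : t ≤ tOne n k) : liThreshold n t < secondFormNormSq n k t := by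
  have hn3 : (3 : ℝ) ≤ n := mod_cast hn
  have hn1 : (0 : ℝ) < n - 1 := by linarith
  have hn2 : (0 : ℝ) < n - 2 := by linarith
  have hA : 0 < 1 + 4 * ((k : ℝ) - 2) * t := one_add_four_mul_pos hk ht
  have hB : 0 < (n : ℝ) ^ 2 * t ^ 2 + 4 * ((n : ℝ) - 1) * t := by positivity
  rw [← sub_pos, ← sign_eq_one_iff, sign_secondFormNormSq_sub_liThreshold hn hk ht,
    sign_eq_one_iff]
  have hX : 0 ≤ 4 * (n : ℝ) ^ 2 * ((n : ℝ) - 1) * t * (tOne n k - t) :=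
    mul_nonneg (by positivity) (sub_nonneg.2 htOne)
  have hY : 0 < 2 * ((n : ℝ) - 1) * ((n : ℝ) - 2) * (√(1 + 4 * ((k : ℝ) - 2) * t)
      * √((n : ℝ) ^ 2 * t ^ 2 + 4 * ((n : ℝ) - 1) * t)) := by
    positivity
  linarith

lemma sign_secondFormNormSq_sub_liThreshold_of_tOne_lt (hn : 3 ≤ n) (hk : 2 ≤ k)
    (ht : 0 < t) (htOne : tOne n k < t) :
    sign (secondFormNormSq n k t - liThreshold n t) = -sign (fnk n k t) := by
  have hn3 : (3 : ℝ) ≤ n := mod_cast hn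
  have hn1 : (0 : ℝ) < n - 1 := by linarith
  have hn2 : (0 : ℝ) < n - 2 := by linarith
  have hA : 0 ≤ 1 + 4 * ((k : ℝ) - 2) * t := (one_add_four_mul_pos hk ht).le
  have hB : 0 ≤ (n : ℝ) ^ 2 * t ^ 2 + 4 * ((n : ℝ) - 1) * t := by positivity
  rw [sign_secondFormNormSq_sub_liThreshold hn hk ht]
  set X := 4 * (n : ℝ) ^ 2 * ((n : ℝ) - 1) * t * (tOne n k - t)
  set Y := 2 * ((n : ℝ) - 1) * ((n : ℝ) - 2) * (√(1 + 4 * ((k : ℝ) - 2) * t)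
      * √((n : ℝ) ^ 2 * t ^ 2 + 4 * ((n : ℝ) - 1) * t))
  have hX : X < 0 := mul_neg_of_pos_of_neg (by positivity) (sub_neg.2 htOne)
  have hY : 0 ≤ Y := by positivity
  have hAB : (√(1 + 4 * ((k : ℝ) - 2) * t) * √((n : ℝ) ^ 2 * t ^ 2 + 4 * ((n : ℝ) - 1) * t)) ^ 2
      = (1 + 4 * ((k : ℝ) - 2) * t) * ((n : ℝ) ^ 2 * t ^ 2 + 4 * ((n : ℝ) - 1) * t) := by
    rw [mul_pow, Real.sq_sqrt hA, Real.sq_sqrt hB]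
  refine sign_eq_neg_sign_of_mul_eq (Q := X - Y) (c := 16 * ((n : ℝ) - 1) ^ 2 * t) ?_
    (by positivity) (by linarith)
  linear_combination sq_sub_sq_eq_fnk (n := n) (k := k) (t := t) (by positivity)
    - (2 * ((n : ℝ) - 1) * ((n : ℝ) - 2)) ^ 2 * hAB

lemma fnk_zero_neg (hn : 3 ≤ n) : fnk n k 0 < 0 := by
  have hn3 : (3 : ℝ) ≤ n := mod_cast hn
  unfold fnk
  nlinarith

lemma fnk_tOne_neg (hn : 3 ≤ n) (hk : 2 ≤ k) (h : 0 < tOne n k) : fnk n k (tOne n k) < 0 := by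
  have hn3 : (3 : ℝ) ≤ n := mod_cast hn
  have hn1 : (0 : ℝ) < n - 1 := by linarith
  have hn2 : (0 : ℝ) < n - 2 := by linarith
  have hA := one_add_four_mul_pos hk h
  have hB : 0 < (n : ℝ) ^ 2 * tOne n k ^ 2 + 4 * ((n : ℝ) - 1) * tOne n k := by positivity
  have key := sq_sub_sq_eq_fnk (k := k) (t := tOne n k) (by positivity : (n : ℝ) ≠ 0)
  rw [sub_self, mul_zero, zero_pow two_ne_zero, zero_sub] at key
  refine neg_of_mul_neg_right (a := 16 * ((n : ℝ) - 1) ^ 2 * tOne n k) ?_ (by positivity)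
  rw [← key, neg_lt_zero]
  positivity

lemma max_tOne_zero_lt {t₀ : ℝ} (hn : 3 ≤ n) (hk : 2 ≤ k) (ht₀ : fnk n k t₀ = 0)
    (ht₀max : ∀ t : ℝ, t₀ < t → 0 < fnk n k t) : max (tOne n k) 0 < t₀ := by
  have hzero : 0 < t₀ := lt_of_neg_of_forall_gt_pos ht₀ ht₀max (fnk_zero_neg hn)
  refine max_lt ?_ hzero
  rcases le_or_gt (tOne n k) 0 with h | h
  · linarith
  · exact lt_of_neg_of_forall_gt_pos ht₀ ht₀max (fnk_tOne_neg hn hk h)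

lemma hasDerivAt_fnk (n k : ℤ) (t : ℝ) : HasDerivAt (fnk n k) (fnk' n k t) t := by
  have h := ((((hasDerivAt_pow 3 t).const_mul ((n : ℝ) ^ 4)).sub
      ((hasDerivAt_pow 2 t).const_mul ((n : ℝ) ^ 2 * (((k : ℝ) - 1) * (n : ℝ) ^ 2
        - 2 * ((k : ℝ) + 2) * (n : ℝ) + 2 * ((k : ℝ) + 2))))).sub
      ((hasDerivAt_id t).const_mul (((n : ℝ) - 1) * (3 * (n : ℝ) - ((k : ℝ) + 2))
        * (((k : ℝ) - 1) * (n : ℝ) - ((k : ℝ) + 2))))).sub_const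
      (((n : ℝ) - 1) * ((n : ℝ) - 2) ^ 2)
  refine h.congr_deriv ?_
  unfold fnk'
  ring

lemma mul_fnk'_sub_two_mul_fnk_pos (hn : 3 ≤ n) (hk : 3 ≤ k) (ht : max (tOne n k) 0 < t) :
    0 < t * fnk' n k t - 2 * fnk n k t := by
  have hn3 : (3 : ℝ) ≤ n := mod_cast hn
  have hn0 : (0 : ℝ) < n := by linarith
  have ht0 : 0 < t := (le_max_right _ _).trans_lt ht
  set c := ((n : ℝ) - 1) * (3 * (n : ℝ) - ((k : ℝ) + 2)) * (((k : ℝ) - 1) * (n : ℝ) - ((k : ℝ) + 2))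
  set d := ((n : ℝ) - 1) * ((n : ℝ) - 2) ^ 2
  set v := 2 * (n : ℝ) ^ 2 * t
  have hcubic : 8 * (n : ℝ) ^ 2 * (t * fnk' n k t - 2 * fnk n k t)
      = v ^ 3 + 4 * c * v + 16 * (n : ℝ) ^ 2 * d := by
    unfold fnk fnk'
    ring
  have hv : (n : ℝ) ^ 2 + 2 * ((n : ℝ) - 1) * ((k : ℝ) - 6) < v := by
    rw [← two_mul_sq_mul_tOne hn0.ne']
    exact mul_lt_mul_of_pos_left ((le_max_left _ _).trans_lt ht) (by positivity)
  suffices 0 < v ^ 3 + 4 * c * v + 16 * (n : ℝ) ^ 2 * d by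
    rw [← hcubic] at this
    exact pos_of_mul_pos_right this (by positivity)
  rcases le_or_gt (k + 2) (3 * n) with hk3n | hk3n
  · have hk3 : (3 : ℝ) ≤ k := mod_cast hk
    have hk3n' : (k : ℝ) + 2 ≤ 3 * n := mod_cast hk3n
    have hc : 0 ≤ c :=
      mul_nonneg (mul_nonneg (by linarith) (by linarith)) (by nlinarith)
    refine depressed_cubic_pos le_rfl (by positivity) ?_ ?_
    · linarith
    · have : 0 ≤ d := mul_nonneg (by linarith) (sq_nonneg _)
      nlinarith
  · -- here `c` may be negative; the certificates are polynomials in `n - 3` and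
    -- `k - 3n + 1` with nonnegative coefficients
    obtain ⟨a, rfl⟩ : ∃ a : ℕ, n = a + 3 := ⟨(n - 3).toNat, by omega⟩
    obtain ⟨b, rfl⟩ : ∃ b : ℕ, k = 3 * a + 8 + b := ⟨(k - (3 * a + 8)).toNat, by omega⟩
    refine depressed_cubic_pos ?_ hv ?_ ?_
    all_goals push_cast [c, d]; ring_nf; positivity

lemma strictMonoOn_fnk_div_sq (hn : 3 ≤ n) (hk : 3 ≤ k) :
    StrictMonoOn (fun t => fnk n k t / t ^ 2) (Set.Ioi (max (tOne n k) 0)) := by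
  have hpos {t : ℝ} (ht : t ∈ Set.Ioi (max (tOne n k) 0)) : 0 < t :=
    (le_max_right _ _).trans_lt ht
  apply strictMonoOn_of_deriv_pos (convex_Ioi _)
  · exact ContinuousOn.div (fun t _ => (hasDerivAt_fnk n k t).continuousAt.continuousWithinAt)
      (continuous_pow 2).continuousOn fun t ht => (pow_pos (hpos ht) 2).ne'
  · intro t ht
    rw [interior_Ioi] at ht
    have ht0 := hpos ht
    have hderiv : HasDerivAt (fun t => fnk n k t / t ^ 2) _ t :=
      (hasDerivAt_fnk n k t).div (hasDerivAt_pow 2 t) (by positivity)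
    rw [hderiv.deriv]
    have := mul_pos ht0 (mul_fnk'_sub_two_mul_fnk_pos hn hk ht)
    apply div_pos _ (by positivity)
    push_cast
    linear_combination this

lemma sign_fnk {t₀ : ℝ} (hn : 3 ≤ n) (hk : 3 ≤ k) (ht₀ : fnk n k t₀ = 0)
    (ht₀max : ∀ t : ℝ, t₀ < t → 0 < fnk n k t) (ht : max (tOne n k) 0 < t) :
    sign (fnk n k t) = sign (t - t₀) := by
  rcases lt_trichotomy t t₀ with h | rfl | h
  · have hmax := max_tOne_zero_lt hn (by omega) ht₀ ht₀max
    have hmono := strictMonoOn_fnk_div_sq hn hk ht hmax h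
    simp only [ht₀, zero_div] at hmono
    rw [sign_neg (sub_neg.2 h), sign_neg]
    simpa using (div_lt_iff₀ (pow_pos ((le_max_right _ _).trans_lt ht) 2)).1 hmono
  · rw [ht₀, sub_self]
  · rw [sign_pos (sub_pos.2 h), sign_pos (ht₀max t h)]

lemma sign_secondFormNormSq_sub_liThreshold_eq {t₀ : ℝ} (hn : 3 ≤ n) (hk : 3 ≤ k)
    (ht₀ : fnk n k t₀ = 0) (ht₀max : ∀ t : ℝ, t₀ < t → 0 < fnk n k t) (ht : 0 < t) :
    sign (secondFormNormSq n k t - liThreshold n t) = sign (t₀ - t) := by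
  by_cases htOne : t ≤ tOne n k
  · have : t < t₀ := htOne.trans_lt ((le_max_left _ _).trans_lt
      (max_tOne_zero_lt hn (by omega) ht₀ ht₀max))
    rw [sign_pos (sub_pos.2 (liThreshold_lt_secondFormNormSq hn (by omega) ht htOne)),
      sign_pos (sub_pos.2 this)]
  · rw [not_le] at htOne
    rw [sign_secondFormNormSq_sub_liThreshold_of_tOne_lt hn (by omega) ht htOne,
      sign_fnk hn hk ht₀ ht₀max (max_lt htOne ht), ← Left.sign_neg, neg_sub]

end

/-- Let `t₀` be the largest real root of `f_{n,k}` (`n, k ≥ 3`). For every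
`t > 0`, setting `S(t) = (n/2)(1 + √(1 + 4(k−2)t))`, the inequality
`S(t) ≥ n + n³t/(2(n−1)) − (n(n−2)/(2(n−1)))√(n²t² + 4(n−1)t)` holds iff `t ≤ t₀`,
with equality iff `t = t₀`. -/
theorem S_ge_rigidity_threshold_iff (n k : ℤ) (hn : 3 ≤ n) (hk : 3 ≤ k)
    (t₀ : ℝ) (ht₀ : fnk n k t₀ = 0) (ht₀max : ∀ t : ℝ, t₀ < t → 0 < fnk n k t) :
    ∀ t : ℝ, 0 < t →
      (((n : ℝ) / 2 * (1 + Real.sqrt (1 + 4 * ((k : ℝ) - 2) * t))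
          ≥ (n : ℝ) + (n : ℝ) ^ 3 * t / (2 * ((n : ℝ) - 1))
            - ((n : ℝ) * ((n : ℝ) - 2) / (2 * ((n : ℝ) - 1)))
              * Real.sqrt ((n : ℝ) ^ 2 * t ^ 2 + 4 * ((n : ℝ) - 1) * t)) ↔ t ≤ t₀) ∧
      (((n : ℝ) / 2 * (1 + Real.sqrt (1 + 4 * ((k : ℝ) - 2) * t))
          = (n : ℝ) + (n : ℝ) ^ 3 * t / (2 * ((n : ℝ) - 1))
            - ((n : ℝ) * ((n : ℝ) - 2) / (2 * ((n : ℝ) - 1)))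
              * Real.sqrt ((n : ℝ) ^ 2 * t ^ 2 + 4 * ((n : ℝ) - 1) * t)) ↔ t = t₀) := by
  intro t ht
  exact ge_iff_and_eq_iff_of_sign_sub_eq
    (sign_secondFormNormSq_sub_liThreshold_eq hn hk ht₀ ht₀max ht)
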